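/- Let n ≥ 1 and let C ∈ ℝ^{n×n} be a cost matrix with 0 ≤ C_{ij} ≤ C_M for all i, j. Define ι : ℝⁿ × ℝⁿ → ℝ by ι(y, y') = W₁(softmax(y), softmax(y')), where softmax(v)_j = exp(v_j)/∑_{l=1}^n exp(v_l) and W₁ is the unregularized 1-Wasserstein distance with cost C. Then for all y, y', ȳ, ȳ' ∈ ℝⁿ, |ι(y, y') − ι(ȳ, ȳ')| ≤ 2·C_M·(‖y − ȳ‖₂ + ‖y' − ȳ'‖₂). -/
import Mathlib


open Finset

/-- `π` is a coupling of the probability vectors `μ` and `ν`: it has nonnegative entries,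
its rows sum to `μ` and its columns sum to `ν`. -/
def IsCoupling (n : ℕ) (μ ν : Fin n → ℝ) (π : Matrix (Fin n) (Fin n) ℝ) : Prop :=
  (∀ i j, 0 ≤ π i j) ∧ (∀ i, ∑ j, π i j = μ i) ∧ (∀ j, ∑ i, π i j = ν j)

/-- The unregularized 1-Wasserstein distance between probability vectors `μ` and `ν`
with cost matrix `C`: the infimum of the transport cost `⟨π, C⟩` over couplings `π`. -/
noncomputable def W1 (n : ℕ) (C : Matrix (Fin n) (Fin n) ℝ) (μ ν : Fin n → ℝ) : ℝ :=
  sInf {c : ℝ | ∃ π : Matrix (Fin n) (Fin n) ℝ,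
    IsCoupling n μ ν π ∧ c = ∑ i, ∑ j, π i j * C i j}

/-- Softmax: `softmax(v)_j = exp(v_j) / ∑ₗ exp(v_l)`. -/
noncomputable def softmax (n : ℕ) (v : Fin n → ℝ) : Fin n → ℝ :=
  fun j => Real.exp (v j) / ∑ l, Real.exp (v l)

lemma W1_bddBelow (n : ℕ) (C : Matrix (Fin n) (Fin n) ℝ)
    (hC : ∀ i j, 0 ≤ C i j) (μ ν : Fin n → ℝ) :
    BddBelow {c : ℝ | ∃ π : Matrix (Fin n) (Fin n) ℝ,
      IsCoupling n μ ν π ∧ c = ∑ i, ∑ j, π i j * C i j} := by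
  refine ⟨0, fun c hc => ?_⟩
  obtain ⟨π, hπ, rfl⟩ := hc
  exact Finset.sum_nonneg fun i _ => Finset.sum_nonneg fun j _ =>
    mul_nonneg (hπ.1 i j) (hC i j)

lemma W1_nonempty (n : ℕ) (C : Matrix (Fin n) (Fin n) ℝ) (μ ν : Fin n → ℝ)
    (hμ0 : ∀ i, 0 ≤ μ i) (hμ1 : ∑ i, μ i = 1)
    (hν0 : ∀ i, 0 ≤ ν i) (hν1 : ∑ i, ν i = 1) :
    Set.Nonempty {c : ℝ | ∃ π : Matrix (Fin n) (Fin n) ℝ,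
      IsCoupling n μ ν π ∧ c = ∑ i, ∑ j, π i j * C i j} := by
  refine ⟨_, fun i j => μ i * ν j, ⟨fun i j => mul_nonneg (hμ0 i) (hν0 j), ?_, ?_⟩, rfl⟩
  · intro i; rw [← Finset.mul_sum, hν1, mul_one]
  · intro j; rw [← Finset.sum_mul, hμ1, one_mul]

lemma W1_transpose (n : ℕ) (C : Matrix (Fin n) (Fin n) ℝ) (μ ν : Fin n → ℝ) :
    W1 n C μ ν = W1 n (fun i j => C j i) ν μ := by
  unfold W1
  congr 1
  ext c
  constructor
  · rintro ⟨π, ⟨h0, hr, hc⟩, rfl⟩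
    exact ⟨fun i j => π j i, ⟨fun i j => h0 j i, hc, hr⟩, by rw [Finset.sum_comm]⟩
  · rintro ⟨π, ⟨h0, hr, hc⟩, rfl⟩
    exact ⟨fun i j => π j i, ⟨fun i j => h0 j i, hc, hr⟩, by rw [Finset.sum_comm]⟩

lemma coupling_shift (n : ℕ) (C : Matrix (Fin n) (Fin n) ℝ) (CM : ℝ)
    (hC : ∀ i j, 0 ≤ C i j ∧ C i j ≤ CM)
    (μ μb ν : Fin n → ℝ)
    (hμ0 : ∀ i, 0 ≤ μ i) (hμ1 : ∑ i, μ i = 1)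
    (hμb0 : ∀ i, 0 < μb i) (hμb1 : ∑ i, μb i = 1)
    (πb : Matrix (Fin n) (Fin n) ℝ) (hπb : IsCoupling n μb ν πb) :
    ∃ π : Matrix (Fin n) (Fin n) ℝ, IsCoupling n μ ν π ∧
      ∑ i, ∑ j, π i j * C i j ≤ (∑ i, ∑ j, πb i j * C i j)
        + CM * ∑ i, (μ i - min (μ i) (μb i)) := by
  obtain ⟨hπb0, hπbr, hπbc⟩ := hπb
  set m : Fin n → ℝ := fun i => min (μ i) (μb i) with hm
  set a : Fin n → ℝ := fun i => μ i - m i with ha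
  set b : Fin n → ℝ := fun j => ν j - ∑ i, πb i j * (m i / μb i) with hb
  set S : ℝ := ∑ i, a i with hSdef
  have hm0 : ∀ i, 0 ≤ m i := fun i => le_min (hμ0 i) (hμb0 i).le
  have hmμb : ∀ i, m i ≤ μb i := fun i => min_le_right _ _
  have hratio0 : ∀ i, 0 ≤ m i / μb i := fun i => div_nonneg (hm0 i) (hμb0 i).le
  have hratio1 : ∀ i, m i / μb i ≤ 1 := fun i => div_le_one_of_le₀ (hmμb i) (hμb0 i).le
  have ha0 : ∀ i, 0 ≤ a i := fun i => sub_nonneg.2 (min_le_left _ _)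
  have hS0 : 0 ≤ S := Finset.sum_nonneg fun i _ => ha0 i
  have hb0 : ∀ j, 0 ≤ b j := by
    intro j
    have h1 : ∑ i, πb i j * (m i / μb i) ≤ ∑ i, πb i j :=
      Finset.sum_le_sum fun i _ => by nlinarith [hπb0 i j, hratio1 i, hratio0 i]
    have h2 : ∑ i, πb i j = ν j := hπbc j
    simp only [hb, sub_nonneg]
    linarith
  have hrowm : ∀ i, ∑ j, πb i j * (m i / μb i) = m i := by
    intro i
    rw [← Finset.sum_mul, hπbr i, mul_div_cancel₀ _ (hμb0 i).ne']
  have hcol' : ∀ j, ∑ i, πb i j * (m i / μb i) = ν j - b j := by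
    intro j; simp only [hb]; ring
  have hbsum : ∑ j, b j = S := by
    have h1 : ∑ j, ∑ i, πb i j * (m i / μb i) = ∑ i, m i := by
      rw [Finset.sum_comm]
      exact Finset.sum_congr rfl fun i _ => hrowm i
    have hνsum : ∑ j, ν j = 1 := by
      calc ∑ j, ν j = ∑ j, ∑ i, πb i j := Finset.sum_congr rfl fun j _ => (hπbc j).symm
        _ = ∑ i, ∑ j, πb i j := by rw [Finset.sum_comm]
        _ = ∑ i, μb i := Finset.sum_congr rfl fun i _ => hπbr i
        _ = 1 := hμb1
    have h2 : ∑ j, b j = 1 - ∑ i, m i := by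
      simp only [hb, Finset.sum_sub_distrib, h1, hνsum]
    have h3 : S = 1 - ∑ i, m i := by
      simp only [hSdef, ha, Finset.sum_sub_distrib, hμ1]
    rw [h2, h3]
  refine ⟨fun i j => πb i j * (m i / μb i) + (if S = 0 then 0 else a i * b j / S),
    ⟨?_, ?_, ?_⟩, ?_⟩
  · intro i j
    have h1 : (0:ℝ) ≤ (if S = 0 then 0 else a i * b j / S) := by
      split_ifs
      · exact le_refl 0
      · exact div_nonneg (mul_nonneg (ha0 i) (hb0 j)) hS0
    exact add_nonneg (mul_nonneg (hπb0 i j) (hratio0 i)) h1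
  · intro i
    rw [Finset.sum_add_distrib, hrowm i]
    by_cases h : S = 0
    · have hall : ∀ i ∈ univ, a i = 0 :=
        (Finset.sum_eq_zero_iff_of_nonneg (fun i _ => ha0 i)).1 (hSdef ▸ h)
      have hai : a i = 0 := hall i (mem_univ i)
      have : μ i = m i := by simp only [ha] at hai; linarith
      simp [h, this]
    · simp only [h, if_neg, if_false]
      have h2 : ∑ j, a i * b j / S = a i := by
        rw [Finset.sum_congr rfl fun j (_ : j ∈ univ) =>
          (by ring : a i * b j / S = a i / S * b j), ← Finset.mul_sum, hbsum,
          div_mul_cancel₀ _ h]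
      rw [h2]; simp only [ha]; ring
  · intro j
    rw [Finset.sum_add_distrib, hcol' j]
    by_cases h : S = 0
    · have hall : ∀ j ∈ univ, b j = 0 :=
        (Finset.sum_eq_zero_iff_of_nonneg (fun j _ => hb0 j)).1 (hbsum.trans h)
      have hbj : b j = 0 := hall j (mem_univ j)
      simp [h, hbj]
    · simp only [h, if_neg, if_false]
      have h2 : ∑ i, a i * b j / S = b j := by
        rw [Finset.sum_congr rfl fun i (_ : i ∈ univ) =>
          (by ring : a i * b j / S = b j / S * a i), ← Finset.mul_sum, ← hSdef,
          div_mul_cancel₀ _ h]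
      rw [h2]; ring
  · have hexp : ∀ i j, (πb i j * (m i / μb i) + (if S = 0 then 0 else a i * b j / S)) * C i j
        = πb i j * (m i / μb i) * C i j + (if S = 0 then 0 else a i * b j / S) * C i j :=
      fun i j => by ring
    simp only [hexp, Finset.sum_add_distrib]
    have hfirst : ∑ i, ∑ j, πb i j * (m i / μb i) * C i j ≤ ∑ i, ∑ j, πb i j * C i j := by
      refine Finset.sum_le_sum fun i _ => Finset.sum_le_sum fun j _ => ?_
      have h3 : πb i j * (m i / μb i) ≤ πb i j := by
        nlinarith [hπb0 i j, hratio1 i, hratio0 i]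
      exact mul_le_mul_of_nonneg_right h3 (hC i j).1
    have hsecond : ∑ i, ∑ j, (if S = 0 then 0 else a i * b j / S) * C i j ≤ CM * S := by
      by_cases h : S = 0
      · simp [h]
      · simp only [h, if_neg, if_false]
        have hCM : 0 ≤ CM := by
          rcases n.eq_zero_or_pos with hn | hn
          · exfalso; subst hn; simpa using hμ1
          · exact le_trans (hC ⟨0, hn⟩ ⟨0, hn⟩).1 (hC ⟨0, hn⟩ ⟨0, hn⟩).2
        have h1 : ∀ i, ∑ j, a i * b j / S * C i j ≤ a i * CM := by
          intro i
          have : ∑ j, a i * b j / S * C i j ≤ ∑ j, a i * b j / S * CM :=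
            Finset.sum_le_sum fun j _ => mul_le_mul_of_nonneg_left (hC i j).2
              (div_nonneg (mul_nonneg (ha0 i) (hb0 j)) hS0)
          have h2 : ∑ j, a i * b j / S * CM = a i * CM := by
            rw [Finset.sum_congr rfl fun j (_ : j ∈ univ) =>
              (by ring : a i * b j / S * CM = a i / S * CM * b j), ← Finset.mul_sum, hbsum]
            field_simp
          linarith
        calc ∑ i, ∑ j, a i * b j / S * C i j ≤ ∑ i, a i * CM :=
              Finset.sum_le_sum fun i _ => h1 i
          _ = S * CM := by rw [← Finset.sum_mul, ← hSdef]
          _ = CM * S := mul_comm _ _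
    linarith

lemma expsum_pos (n : ℕ) (hn : 1 ≤ n) (v : Fin n → ℝ) : 0 < ∑ l, Real.exp (v l) := by
  have : Nonempty (Fin n) := Fin.pos_iff_nonempty.mp hn
  exact Finset.sum_pos (fun l _ => Real.exp_pos _) univ_nonempty

lemma softmax_pos (n : ℕ) (hn : 1 ≤ n) (v : Fin n → ℝ) (j : Fin n) : 0 < softmax n v j :=
  div_pos (Real.exp_pos _) (expsum_pos n hn v)

lemma softmax_sum (n : ℕ) (hn : 1 ≤ n) (v : Fin n → ℝ) : ∑ j, softmax n v j = 1 := by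
  unfold softmax
  rw [← Finset.sum_div, div_self (expsum_pos n hn v).ne']

lemma softmax_ratio (n : ℕ) (hn : 1 ≤ n) (u v : Fin n → ℝ) (j : Fin n) :
    Real.exp (-(2 * Real.sqrt (∑ l, (u l - v l) ^ 2))) * softmax n u j ≤ softmax n v j := by
  set r := Real.sqrt (∑ l, (u l - v l) ^ 2) with hr
  have hcoord : ∀ l, |u l - v l| ≤ r := by
    intro l
    rw [← Real.sqrt_sq_eq_abs]
    exact Real.sqrt_le_sqrt (Finset.single_le_sum
      (f := fun l => (u l - v l) ^ 2) (fun l _ => sq_nonneg _) (mem_univ l))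
  have hZu := expsum_pos n hn u
  have hZv := expsum_pos n hn v
  have h1 : Real.exp (-r) * Real.exp (u j) ≤ Real.exp (v j) := by
    rw [← Real.exp_add]
    apply Real.exp_le_exp.2
    have := abs_le.1 (hcoord j)
    linarith
  have h2 : ∑ l, Real.exp (v l) ≤ Real.exp r * ∑ l, Real.exp (u l) := by
    rw [Finset.mul_sum]
    refine Finset.sum_le_sum fun l _ => ?_
    rw [← Real.exp_add]
    apply Real.exp_le_exp.2
    have := abs_le.1 (hcoord l)
    linarith
  have hexp : Real.exp (-(2 * r)) * Real.exp r = Real.exp (-r) := by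
    rw [← Real.exp_add]; congr 1; ring
  unfold softmax
  rw [mul_div_assoc', div_le_div_iff₀ hZu hZv]
  calc Real.exp (-(2 * r)) * Real.exp (u j) * ∑ l, Real.exp (v l)
      ≤ Real.exp (-(2 * r)) * Real.exp (u j) * (Real.exp r * ∑ l, Real.exp (u l)) := by
        apply mul_le_mul_of_nonneg_left h2 (by positivity)
    _ = Real.exp (-r) * Real.exp (u j) * ∑ l, Real.exp (u l) := by
        rw [show Real.exp (-(2 * r)) * Real.exp (u j) * (Real.exp r * ∑ l, Real.exp (u l))
          = (Real.exp (-(2 * r)) * Real.exp r) * (Real.exp (u j) * ∑ l, Real.exp (u l)) from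
          by ring, hexp]
        ring
    _ ≤ Real.exp (v j) * ∑ l, Real.exp (u l) := mul_le_mul_of_nonneg_right h1 hZu.le

lemma softmax_tv (n : ℕ) (hn : 1 ≤ n) (u v : Fin n → ℝ) :
    ∑ j, (softmax n u j - min (softmax n u j) (softmax n v j)) ≤
      2 * Real.sqrt (∑ l, (u l - v l) ^ 2) := by
  set r := Real.sqrt (∑ l, (u l - v l) ^ 2) with hr
  have hr0 : 0 ≤ r := Real.sqrt_nonneg _
  have he1 : Real.exp (-(2 * r)) ≤ 1 := Real.exp_le_one_iff.2 (by linarith)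
  have key : ∀ j, softmax n u j - min (softmax n u j) (softmax n v j)
      ≤ softmax n u j * (1 - Real.exp (-(2 * r))) := by
    intro j
    have h1 := softmax_ratio n hn u v j
    have h2 : Real.exp (-(2 * r)) * softmax n u j ≤ softmax n u j := by
      nlinarith [(softmax_pos n hn u j).le]
    have h3 : Real.exp (-(2 * r)) * softmax n u j ≤ min (softmax n u j) (softmax n v j) :=
      le_min h2 h1
    nlinarith
  calc ∑ j, (softmax n u j - min (softmax n u j) (softmax n v j))
      ≤ ∑ j, softmax n u j * (1 - Real.exp (-(2 * r))) :=
        Finset.sum_le_sum fun j _ => key j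
    _ = 1 - Real.exp (-(2 * r)) := by
        rw [← Finset.sum_mul, softmax_sum n hn u, one_mul]
    _ ≤ 2 * r := by
        have := Real.add_one_le_exp (-(2 * r))
        linarith


lemma W1_shift (n : ℕ) (C : Matrix (Fin n) (Fin n) ℝ) (CM : ℝ)
    (hC : ∀ i j, 0 ≤ C i j ∧ C i j ≤ CM)
    (μ μb ν : Fin n → ℝ)
    (hμ0 : ∀ i, 0 ≤ μ i) (hμ1 : ∑ i, μ i = 1)
    (hμb0 : ∀ i, 0 < μb i) (hμb1 : ∑ i, μb i = 1)
    (hν0 : ∀ i, 0 ≤ ν i) (hν1 : ∑ i, ν i = 1) :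
    W1 n C μ ν ≤ W1 n C μb ν + CM * ∑ i, (μ i - min (μ i) (μb i)) := by
  have hbdd := W1_bddBelow n C (fun i j => (hC i j).1) μ ν
  have hne := W1_nonempty n C μb ν (fun i => (hμb0 i).le) hμb1 hν0 hν1
  have key : ∀ c ∈ {c : ℝ | ∃ π : Matrix (Fin n) (Fin n) ℝ,
      IsCoupling n μb ν π ∧ c = ∑ i, ∑ j, π i j * C i j},
      W1 n C μ ν - CM * ∑ i, (μ i - min (μ i) (μb i)) ≤ c := by
    rintro c ⟨πb, hπb, rfl⟩
    obtain ⟨π, hπ, hcost⟩ := coupling_shift n C CM hC μ μb ν hμ0 hμ1 hμb0 hμb1 πb hπb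
    have hle : W1 n C μ ν ≤ ∑ i, ∑ j, π i j * C i j := csInf_le hbdd ⟨π, hπ, rfl⟩
    linarith
  have h := le_csInf hne key
  have hW : W1 n C μb ν = sInf {c : ℝ | ∃ π : Matrix (Fin n) (Fin n) ℝ,
      IsCoupling n μb ν π ∧ c = ∑ i, ∑ j, π i j * C i j} := rfl
  rw [hW]
  linarith

lemma W1_shift_right (n : ℕ) (C : Matrix (Fin n) (Fin n) ℝ) (CM : ℝ)
    (hC : ∀ i j, 0 ≤ C i j ∧ C i j ≤ CM)
    (μ ν νb : Fin n → ℝ)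
    (hμ0 : ∀ i, 0 ≤ μ i) (hμ1 : ∑ i, μ i = 1)
    (hν0 : ∀ i, 0 ≤ ν i) (hν1 : ∑ i, ν i = 1)
    (hνb0 : ∀ i, 0 < νb i) (hνb1 : ∑ i, νb i = 1) :
    W1 n C μ ν ≤ W1 n C μ νb + CM * ∑ j, (ν j - min (ν j) (νb j)) := by
  rw [W1_transpose n C μ ν, W1_transpose n C μ νb]
  exact W1_shift n (fun i j => C j i) CM (fun i j => hC j i) ν νb μ
    hν0 hν1 hνb0 hνb1 hμ0 hμ1

/-- Lipschitz bound for the Wasserstein loss composed with softmax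
(Frogner et al., Proposition B.10): if `0 ≤ C_{ij} ≤ C_M` then
`ι(y,y') = W₁(softmax y, softmax y')` satisfies
`|ι(y,y') − ι(ȳ,ȳ')| ≤ 2 C_M (‖y − ȳ‖₂ + ‖y' − ȳ'‖₂)`. -/
theorem wasserstein_softmax_lipschitz (n : ℕ) (hn : 1 ≤ n)
    (C : Matrix (Fin n) (Fin n) ℝ) (CM : ℝ)
    (hC : ∀ i j, 0 ≤ C i j ∧ C i j ≤ CM) :
    ∀ y y' ybar ybar' : Fin n → ℝ,
      |W1 n C (softmax n y) (softmax n y') - W1 n C (softmax n ybar) (softmax n ybar')| ≤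
        2 * CM * (Real.sqrt (∑ j, (y j - ybar j) ^ 2) +
          Real.sqrt (∑ j, (y' j - ybar' j) ^ 2)) := by

  intro y y' ybar ybar'
  have hCM : 0 ≤ CM := le_trans (hC ⟨0, hn⟩ ⟨0, hn⟩).1 (hC ⟨0, hn⟩ ⟨0, hn⟩).2
  set r := Real.sqrt (∑ j, (y j - ybar j) ^ 2) with hrdef
  set r' := Real.sqrt (∑ j, (y' j - ybar' j) ^ 2) with hrdef'
  have hsym : ∀ u v : Fin n → ℝ, Real.sqrt (∑ l, (u l - v l) ^ 2)
      = Real.sqrt (∑ l, (v l - u l) ^ 2) := fun u v => by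
    congr 1; exact Finset.sum_congr rfl fun l _ => by ring
  -- probability vector facts
  have P := fun v => softmax_pos n hn v
  have Q := fun v => softmax_sum n hn v
  have Pl := fun v i => (softmax_pos n hn v i).le
  -- the four one-sided shifts
  have h1 : W1 n C (softmax n y) (softmax n y') ≤ W1 n C (softmax n ybar) (softmax n y')
      + CM * ∑ i, (softmax n y i - min (softmax n y i) (softmax n ybar i)) :=
    W1_shift n C CM hC _ _ _ (Pl y) (Q y) (P ybar) (Q ybar) (Pl y') (Q y')
  have h2 : W1 n C (softmax n ybar) (softmax n y') ≤ W1 n C (softmax n ybar) (softmax n ybar')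
      + CM * ∑ j, (softmax n y' j - min (softmax n y' j) (softmax n ybar' j)) :=
    W1_shift_right n C CM hC _ _ _ (Pl ybar) (Q ybar) (Pl y') (Q y') (P ybar') (Q ybar')
  have h3 : W1 n C (softmax n ybar) (softmax n ybar') ≤ W1 n C (softmax n y) (softmax n ybar')
      + CM * ∑ i, (softmax n ybar i - min (softmax n ybar i) (softmax n y i)) :=
    W1_shift n C CM hC _ _ _ (Pl ybar) (Q ybar) (P y) (Q y) (Pl ybar') (Q ybar')
  have h4 : W1 n C (softmax n y) (softmax n ybar') ≤ W1 n C (softmax n y) (softmax n y')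
      + CM * ∑ j, (softmax n ybar' j - min (softmax n ybar' j) (softmax n y' j)) :=
    W1_shift_right n C CM hC _ _ _ (Pl y) (Q y) (Pl ybar') (Q ybar') (P y') (Q y')
  -- TV bounds
  have t1 : ∑ i, (softmax n y i - min (softmax n y i) (softmax n ybar i)) ≤ 2 * r :=
    softmax_tv n hn y ybar
  have t2 : ∑ j, (softmax n y' j - min (softmax n y' j) (softmax n ybar' j)) ≤ 2 * r' :=
    softmax_tv n hn y' ybar'
  have t3 : ∑ i, (softmax n ybar i - min (softmax n ybar i) (softmax n y i)) ≤ 2 * r := by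
    have := softmax_tv n hn ybar y
    rw [hsym ybar y] at this
    exact this
  have t4 : ∑ j, (softmax n ybar' j - min (softmax n ybar' j) (softmax n y' j)) ≤ 2 * r' := by
    have := softmax_tv n hn ybar' y'
    rw [hsym ybar' y'] at this
    exact this
  have m1 := mul_le_mul_of_nonneg_left t1 hCM
  have m2 := mul_le_mul_of_nonneg_left t2 hCM
  have m3 := mul_le_mul_of_nonneg_left t3 hCM
  have m4 := mul_le_mul_of_nonneg_left t4 hCM
  rw [abs_sub_le_iff]
  constructor <;> nlinarith
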